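/- Let μ be a Borel probability measure on a cube in ℝ^{2k} such that for some constants C > 0 and κ > 0, every axis-parallel cube R of side length ε satisfies μ(R) ≤ C·ε^{1/κ}, and suppose μ(D₁) = δ > 0 for a fixed sub-cube D₁. Then for every integer m ≥ 1 there exist constants c, c' > 0 (depending on C, κ, δ, k, m) such that for every integer D ≥ 2 there are D axis-parallel cubes R₁, …, R_D, each of side length c'·D^{-2κ}, with μ(R_i) ≥ c·D^{-4kκ} for all i, and such that the dilated cubes mR₁, …, mR_D (same centers, m times the side length) are pairwise disjoint. -/

import Mathlib

open MeasureTheory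
open scoped ENNReal

/-!
Greedy pigeonhole at scale `s = c' D^{-2κ}`. Cover the cube `D₁` by a grid of about
`(ℓ₁ / s)^{2k}` cubes of side `s`. Once `n < D` cubes are chosen, delete from `D₁` the
cubes of side `(2m+1)s` around their centers: by the Hölder bound these carry mass at most
`D · C ((2m+1)s)^{1/κ} ≤ δ/2` (this fixes `c'`), so some grid cube meets the rest of `D₁` in mass
at least `(δ/2) / #grid ≥ c D^{-4kκ}` (this fixes `c`). A point of the rest lying in that grid
cube is outside every deleted cube, which keeps the new `m`-dilate off the old ones.
-/

/-- The axis-parallel cube in `ℝ^m` with center `x` and side length `ℓ`. -/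
def cube {m : ℕ} (x : Fin m → ℝ) (ℓ : ℝ) : Set (Fin m → ℝ) :=
  {y | ∀ i, |y i - x i| ≤ ℓ / 2}

theorem exists_pairwise_of_forall_exists {X : Type*} {r : X → X → Prop} [Std.Symm r]
    {good : X → Prop} {N : ℕ}
    (h : ∀ n < N, ∀ x : Fin n → X, ∃ y, good y ∧ ∀ i, r y (x i)) :
    ∃ x : Fin N → X, (∀ i, good (x i)) ∧ Pairwise (Function.onFun r x) := by
  suffices ∀ n ≤ N, ∃ x : Fin n → X, (∀ i, good (x i)) ∧ Pairwise (Function.onFun r x) from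
    this N le_rfl
  intro n
  induction n with
  | zero => exact fun _ => ⟨Fin.elim0, fun i => i.elim0, fun i => i.elim0⟩
  | succ n ih =>
    intro hn
    obtain ⟨x, hx, hpair⟩ := ih (by omega)
    obtain ⟨y, hy, hyx⟩ := h n hn x
    refine ⟨Fin.snoc x y, Fin.lastCases (by simpa) (by simpa), ?_⟩
    intro i j hij
    induction i using Fin.lastCases <;> induction j using Fin.lastCases
    · exact absurd rfl hij
    · simpa [Function.onFun] using hyx _
    · simpa [Function.onFun] using Std.Symm.symm _ _ (hyx _)
    · simpa [Function.onFun] using hpair (ne_of_apply_ne Fin.castSucc hij)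

theorem exists_le_measure_inter_of_subset_iUnion {α ι : Type*} [MeasurableSpace α] [Fintype ι]
    [Nonempty ι] (μ : Measure α) {G : Set α} {S : ι → Set α} (hG : G ⊆ ⋃ i, S i) {a : ℝ≥0∞}
    (ha : Fintype.card ι * a ≤ μ G) : ∃ i, a ≤ μ (S i ∩ G) := by
  by_contra! hlt
  have hcover : G ⊆ ⋃ i, S i ∩ G := fun y hy => by
    obtain ⟨i, hi⟩ := Set.mem_iUnion.mp (hG hy)
    exact Set.mem_iUnion.mpr ⟨i, hi, hy⟩
  refine (ha.trans ((measure_mono hcover).trans (measure_iUnion_fintype_le μ _))).not_gt ?_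
  calc ∑ i, μ (S i ∩ G) < ∑ _i : ι, a :=
        ENNReal.sum_lt_sum_of_nonempty Finset.univ_nonempty fun i _ => hlt i
    _ = Fintype.card ι * a := by simp

theorem mem_cube_of_mem_of_mem {n : ℕ} {x y z w : Fin n → ℝ} {r ℓ : ℝ}
    (hy : y ∈ cube z r) (hz : x ∈ cube z ℓ) (hw : x ∈ cube w ℓ) : y ∈ cube w (r + 2 * ℓ) := by
  intro i
  linarith [abs_sub_le (y i) (z i) (w i), abs_sub_le (z i) (x i) (w i), abs_sub_comm (z i) (x i),
    hy i, hz i, hw i]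

theorem disjoint_cube_of_mem_of_notMem {n : ℕ} {y z w : Fin n → ℝ} {r ℓ : ℝ}
    (hy : y ∈ cube z r) (hy' : y ∉ cube w (r + 2 * ℓ)) : Disjoint (cube z ℓ) (cube w ℓ) :=
  Set.disjoint_left.mpr fun _ hz hw => hy' (mem_cube_of_mem_of_mem hy hz hw)

theorem exists_fin_abs_sub_le {s u : ℝ} {M : ℕ} (hs : 0 < s) (hM : 0 < M) (hu₀ : 0 ≤ u)
    (huM : u ≤ M * s) : ∃ j : Fin M, |u - (j + 1 / 2) * s| ≤ s / 2 := by
  set j := min ⌊u / s⌋₊ (M - 1)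
  have hj_le : (j : ℝ) * s ≤ u := by
    have : (j : ℝ) ≤ u / s :=
      (Nat.cast_le.mpr (min_le_left _ _)).trans (Nat.floor_le (by positivity))
    rwa [le_div_iff₀ hs] at this
  have hle_j : u ≤ (j + 1) * s := by
    rcases le_total ⌊u / s⌋₊ (M - 1) with h | h
    · rw [show j = ⌊u / s⌋₊ from min_eq_left h, ← div_le_iff₀ hs]
      exact (Nat.lt_floor_add_one _).le
    · rw [show j = M - 1 from min_eq_right h, Nat.cast_sub hM, Nat.cast_one, sub_add_cancel]
      exact huM
  exact ⟨⟨j, by omega⟩, abs_le.mpr ⟨by linarith, by linarith⟩⟩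

noncomputable def gridCenter {n M : ℕ} (x : Fin n → ℝ) (ℓ s : ℝ) (g : Fin n → Fin M) :
    Fin n → ℝ :=
  fun i => x i - ℓ / 2 + (g i + 1 / 2) * s

theorem cube_subset_iUnion_cube_gridCenter {n M : ℕ} (x : Fin n → ℝ) {ℓ s : ℝ} (hs : 0 < s)
    (hM : 0 < M) (hℓ : ℓ ≤ M * s) :
    cube x ℓ ⊆ ⋃ g : Fin n → Fin M, cube (gridCenter x ℓ s g) s := by
  intro y hy
  have hcoord (i : Fin n) : ∃ j : Fin M, |y i - x i + ℓ / 2 - (j + 1 / 2) * s| ≤ s / 2 := by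
    obtain ⟨hlo, hhi⟩ := abs_le.mp (hy i)
    exact exists_fin_abs_sub_le hs hM (by linarith) (by linarith)
  choose g hg using hcoord
  exact Set.mem_iUnion.mpr ⟨g, fun i => by convert hg i using 2; simp only [gridCenter]; ring⟩

theorem exists_le_measure_cube_inter_nonempty {n M : ℕ} (μ : Measure (Fin n → ℝ))
    {x : Fin n → ℝ} {ℓ s : ℝ} (hs : 0 < s) (hM : 0 < M) (hℓ : ℓ ≤ M * s)
    {G : Set (Fin n → ℝ)} (hG : G ⊆ cube x ℓ) {a : ℝ≥0∞} (ha₀ : a ≠ 0)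
    (ha : (M : ℝ≥0∞) ^ n * a ≤ μ G) :
    ∃ y, a ≤ μ (cube y s) ∧ (cube y s ∩ G).Nonempty := by
  have : NeZero M := ⟨hM.ne'⟩
  obtain ⟨g, hg⟩ := exists_le_measure_inter_of_subset_iUnion μ
    (hG.trans (cube_subset_iUnion_cube_gridCenter x hs hM hℓ)) (by simpa using ha)
  exact ⟨gridCenter x ℓ s g, hg.trans (measure_mono Set.inter_subset_left),
    nonempty_of_measure_ne_zero (ne_bot_of_le_ne_bot ha₀ hg)⟩

theorem exists_le_measure_cube_disjoint {n N M : ℕ} (μ : Measure (Fin n → ℝ))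
    {x : Fin n → ℝ} {ℓ s r : ℝ} (hs : 0 < s) (hM : 0 < M) (hℓ : ℓ ≤ M * s)
    (ctr : Fin N → Fin n → ℝ) {a : ℝ≥0∞} (ha₀ : a ≠ 0)
    (ha : (M : ℝ≥0∞) ^ n * a ≤ μ (cube x ℓ) - ∑ i, μ (cube (ctr i) (s + 2 * r))) :
    ∃ y, a ≤ μ (cube y s) ∧ ∀ i, Disjoint (cube y r) (cube (ctr i) r) := by
  have hG : (M : ℝ≥0∞) ^ n * a ≤ μ (cube x ℓ \ ⋃ i, cube (ctr i) (s + 2 * r)) :=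
    ha.trans ((tsub_le_tsub_left (measure_iUnion_fintype_le μ _) _).trans (le_measure_sdiff ..))
  obtain ⟨y, hy, z, hzy, hzG⟩ :=
    exists_le_measure_cube_inter_nonempty μ hs hM hℓ Set.sdiff_subset ha₀ hG
  exact ⟨y, hy, fun i => disjoint_cube_of_mem_of_notMem hzy
    fun hz => hzG.2 (Set.mem_iUnion.mpr ⟨i, hz⟩)⟩

theorem exists_pairwise_disjoint_cubes {d D M : ℕ} (μ : Measure (Fin d → ℝ))
    {x : Fin d → ℝ} {ℓ s r : ℝ} (hs : 0 < s) (hM : 0 < M) (hℓ : ℓ ≤ M * s) {a b : ℝ≥0∞}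
    (ha₀ : a ≠ 0) (hb_top : b ≠ ∞) (hb : ∀ y, μ (cube y (s + 2 * r)) ≤ b)
    (hab : D * b + M ^ d * a ≤ μ (cube x ℓ)) :
    ∃ ctr : Fin D → Fin d → ℝ, (∀ i, a ≤ μ (cube (ctr i) s)) ∧
      Pairwise (Function.onFun Disjoint fun i => cube (ctr i) r) := by
  refine exists_pairwise_of_forall_exists (r := Function.onFun Disjoint (cube · r))
    (good := fun y => a ≤ μ (cube y s)) (N := D) fun n hn ctr => ?_
  have hsum : ∑ i, μ (cube (ctr i) (s + 2 * r)) ≤ D * b :=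
    calc ∑ i, μ (cube (ctr i) (s + 2 * r)) ≤ ∑ _i : Fin n, b := Finset.sum_le_sum fun i _ => hb _
      _ = n * b := by simp
      _ ≤ D * b := by gcongr
  have hsum_top : ∑ i, μ (cube (ctr i) (s + 2 * r)) ≠ ∞ :=
    ne_top_of_le_ne_top (ENNReal.mul_ne_top (ENNReal.natCast_ne_top D) hb_top) hsum
  exact exists_le_measure_cube_disjoint μ hs hM hℓ ctr ha₀
    (ENNReal.le_sub_of_add_le_left hsum_top ((add_le_add_left hsum _).trans hab))

theorem natCeil_div_mul_le {ℓ c t : ℝ} (hℓ : 0 ≤ ℓ) (hc : 0 < c) (ht : 0 < t) (ht1 : t ≤ 1) :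
    (⌈ℓ / (c * t)⌉₊ : ℝ) * t ≤ (ℓ + c) / c := by
  have hceil := Nat.ceil_lt_add_one (show 0 ≤ ℓ / (c * t) by positivity)
  calc (⌈ℓ / (c * t)⌉₊ : ℝ) * t ≤ (ℓ / (c * t) + 1) * t := by gcongr
    _ = ℓ / c + t := by field_simp
    _ ≤ (ℓ + c) / c := by rw [add_div, div_self hc.ne']; linarith

theorem rpow_mul_rpow_neg_rpow_one_div {a D κ : ℝ} (ha : 0 ≤ a) (hD : 0 ≤ D) (hκ : κ ≠ 0) :
    (a ^ κ * D ^ (-(2 * κ))) ^ (1 / κ) = a / D ^ 2 := by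
  rw [Real.mul_rpow (by positivity) (by positivity), ← Real.rpow_mul ha, ← Real.rpow_mul hD,
    show κ * (1 / κ) = 1 by field_simp, show -(2 * κ) * (1 / κ) = -2 by field_simp,
    Real.rpow_one, Real.rpow_neg hD, Real.rpow_two, div_eq_mul_inv]

theorem mul_rpow_dilate_le {C κ δ D : ℝ} (hC : 0 < C) (hκ : 0 < κ) (hδ : 0 < δ) (hD : 1 ≤ D)
    (m : ℕ) {s : ℝ} (hs : s = (δ / (2 * C)) ^ κ / (2 * m + 1) * D ^ (-(2 * κ))) :
    C * (s + 2 * (m * s)) ^ (1 / κ) ≤ δ / 2 / D :=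
  calc C * (s + 2 * (m * s)) ^ (1 / κ)
        = C * ((δ / (2 * C)) ^ κ * D ^ (-(2 * κ))) ^ (1 / κ) := by
        rw [hs]; congr 2; field_simp; ring
    _ = δ / 2 / D ^ 2 := by
        rw [rpow_mul_rpow_neg_rpow_one_div (by positivity) (by positivity) hκ.ne']; field_simp
    _ ≤ δ / 2 / D := by gcongr; nlinarith

theorem natCeil_pow_mul_le {ℓ c δ D κ : ℝ} (hℓ : 0 < ℓ) (hc : 0 < c) (hδ : 0 < δ) (hD : 1 ≤ D)
    (hκ : 0 < κ) (k : ℕ) :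
    (⌈ℓ / (c * D ^ (-(2 * κ)))⌉₊ : ℝ) ^ (2 * k) *
      (δ / 2 * (c / (ℓ + c)) ^ (2 * k) * D ^ (-(4 * k * κ))) ≤ δ / 2 := by
  set t := D ^ (-(2 * κ))
  have hexp : D ^ (-(4 * k * κ)) = t ^ (2 * k) := by
    rw [← Real.rpow_natCast, ← Real.rpow_mul (by positivity)]; push_cast; ring_nf
  have hMt : (⌈ℓ / (c * t)⌉₊ : ℝ) * t * (c / (ℓ + c)) ≤ 1 :=
    calc (⌈ℓ / (c * t)⌉₊ : ℝ) * t * (c / (ℓ + c)) ≤ (ℓ + c) / c * (c / (ℓ + c)) := by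
          gcongr
          exact natCeil_div_mul_le hℓ.le hc (by positivity)
            (Real.rpow_le_one_of_one_le_of_nonpos hD (by linarith))
      _ = 1 := by field_simp
  calc (⌈ℓ / (c * t)⌉₊ : ℝ) ^ (2 * k) * (δ / 2 * (c / (ℓ + c)) ^ (2 * k) * D ^ (-(4 * k * κ)))
      = δ / 2 * ((⌈ℓ / (c * t)⌉₊ : ℝ) * t * (c / (ℓ + c))) ^ (2 * k) := by rw [hexp]; ring
    _ ≤ δ / 2 := mul_le_of_le_one_right (by positivity) (pow_le_one₀ (by positivity) hMt)

theorem cube_selection_general (k : ℕ)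
    (μ : Measure (Fin (2 * k) → ℝ))
    (C κ δ : ℝ) (hC : 0 < C) (hκ : 0 < κ) (hδ : 0 < δ)
    (x₁ : Fin (2 * k) → ℝ) (ℓ₁ : ℝ) (hℓ₁ : 0 < ℓ₁)
    (hμD₁ : μ (cube x₁ ℓ₁) = ENNReal.ofReal δ)
    (hHolder : ∀ (x : Fin (2 * k) → ℝ) (ε : ℝ), 0 < ε →
      μ (cube x ε) ≤ ENNReal.ofReal (C * ε ^ (1 / κ)))
    (m : ℕ) :
    ∃ c c' : ℝ, 0 < c ∧ 0 < c' ∧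
      ∀ D : ℕ, 2 ≤ D →
        ∃ ctr : Fin D → (Fin (2 * k) → ℝ),
          (∀ i, ENNReal.ofReal (c * (D : ℝ) ^ (-(4 * k * κ))) ≤
              μ (cube (ctr i) (c' * (D : ℝ) ^ (-(2 * κ))))) ∧
          Pairwise (Function.onFun Disjoint
            (fun i => cube (ctr i) ((m : ℝ) * (c' * (D : ℝ) ^ (-(2 * κ)))))) := by
  set c' := (δ / (2 * C)) ^ κ / (2 * m + 1)
  refine ⟨δ / 2 * (c' / (ℓ₁ + c')) ^ (2 * k), c', by positivity, by positivity, fun D hD => ?_⟩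
  have hD1 : (1 : ℝ) ≤ D := by exact_mod_cast (by omega : 1 ≤ D)
  set s := c' * (D : ℝ) ^ (-(2 * κ))
  have hdilate := mul_rpow_dilate_le hC hκ hδ hD1 m (s := s) rfl
  have hcount := natCeil_pow_mul_le hℓ₁ (by positivity : 0 < c') hδ hD1 hκ k
  refine exists_pairwise_disjoint_cubes μ (x := x₁) (M := ⌈ℓ₁ / s⌉₊) (by positivity)
    (Nat.ceil_pos.mpr (by positivity)) ((div_le_iff₀ (by positivity)).mp (Nat.le_ceil _))
    (ENNReal.ofReal_pos.mpr (by positivity)).ne' ENNReal.ofReal_ne_top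
    (fun y => (hHolder y _ (by positivity)).trans (ENNReal.ofReal_le_ofReal hdilate)) ?_
  rw [hμD₁, ← ENNReal.ofReal_natCast, ← ENNReal.ofReal_natCast,
    ← ENNReal.ofReal_pow (by positivity), ← ENNReal.ofReal_mul (by positivity),
    ← ENNReal.ofReal_mul (by positivity),
    ← ENNReal.ofReal_add (by positivity) (by positivity)]
  refine ENNReal.ofReal_le_ofReal ?_
  rw [mul_div_cancel₀ _ (by positivity : (D : ℝ) ≠ 0)]
  linarith

/-- Let `μ` be a Borel probability measure on a cube in `ℝ^{2k}` such that
every axis-parallel cube of side `ε` has `μ`-measure at most `C·ε^{1/κ}`, and suppose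
`μ(D₁) = δ > 0` for a fixed sub-cube `D₁`.  Then for every `m ≥ 1` there are constants
`c, c' > 0` such that for every integer `D ≥ 2` there are `D` axis-parallel cubes
`R₁, …, R_D`, each of side `c'·D^{-2κ}`, with `μ(R_i) ≥ c·D^{-4kκ}`, whose `m`-fold dilates
(same centers, `m` times the side length) are pairwise disjoint. -/
theorem cube_selection (k : ℕ) (hk : 1 ≤ k)
    (μ : Measure (Fin (2 * k) → ℝ)) [IsProbabilityMeasure μ]
    (C κ δ : ℝ) (hC : 0 < C) (hκ : 0 < κ) (hδ : 0 < δ)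
    (x₁ : Fin (2 * k) → ℝ) (ℓ₁ : ℝ) (hℓ₁ : 0 < ℓ₁)
    (hμD₁ : μ (cube x₁ ℓ₁) = ENNReal.ofReal δ)
    (hHolder : ∀ (x : Fin (2 * k) → ℝ) (ε : ℝ), 0 < ε →
      μ (cube x ε) ≤ ENNReal.ofReal (C * ε ^ (1 / κ)))
    (m : ℕ) (hm : 1 ≤ m) :
    ∃ c c' : ℝ, 0 < c ∧ 0 < c' ∧
      ∀ D : ℕ, 2 ≤ D →
        ∃ ctr : Fin D → (Fin (2 * k) → ℝ),
          (∀ i, ENNReal.ofReal (c * (D : ℝ) ^ (-(4 * k * κ))) ≤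
              μ (cube (ctr i) (c' * (D : ℝ) ^ (-(2 * κ))))) ∧
          Pairwise (Function.onFun Disjoint
            (fun i => cube (ctr i) ((m : ℝ) * (c' * (D : ℝ) ^ (-(2 * κ)))))) :=
  cube_selection_general k μ C κ δ hC hκ hδ x₁ ℓ₁ hℓ₁ hμD₁ hHolder m
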